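/- Let b = A(X*) + e for a rank-k matrix X* and noise vector e, with δ_{2k} ≤ 1/3 and constant C > (1+δ_{2k})/(1-3δ_{2k}). If the SVP iterate X^t satisfies ψ(X^t) ≥ C²‖e‖²/2, then ψ(X^{t+1}) ≤ D·ψ(X^t) where D = 1/C² + (2δ_{2k}/(1-δ_{2k}))(1 + 1/C)² < 1. -/
import Mathlib


open scoped BigOperators RealInnerProductSpace

/-- Squared Frobenius norm. -/
noncomputable def froSq {m n : ℕ} (X : Matrix (Fin m) (Fin n) ℝ) : ℝ :=
  ∑ i, ∑ j, (X i j) ^ 2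

/-- Frobenius norm. -/
noncomputable def fro {m n : ℕ} (X : Matrix (Fin m) (Fin n) ℝ) : ℝ :=
  Real.sqrt (froSq X)

/-- Trace (Frobenius) inner product. -/
noncomputable def frobInner {m n : ℕ} (X Y : Matrix (Fin m) (Fin n) ℝ) : ℝ :=
  ∑ i, ∑ j, X i j * Y i j

lemma froSq_nonneg {m n : ℕ} (X : Matrix (Fin m) (Fin n) ℝ) : 0 ≤ froSq X :=
  Finset.sum_nonneg fun _ _ => Finset.sum_nonneg fun _ _ => sq_nonneg _

lemma froSq_expand {m n : ℕ} (P Q : Matrix (Fin m) (Fin n) ℝ) :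
    froSq (P - Q) = froSq P - 2 * frobInner P Q + froSq Q := by
  unfold froSq frobInner
  rw [Finset.mul_sum, ← Finset.sum_sub_distrib, ← Finset.sum_add_distrib]
  refine Finset.sum_congr rfl fun i _ => ?_
  rw [Finset.mul_sum, ← Finset.sum_sub_distrib, ← Finset.sum_add_distrib]
  refine Finset.sum_congr rfl fun j _ => ?_
  simp only [Matrix.sub_apply]
  ring

lemma frobInner_comm {m n : ℕ} (P Q : Matrix (Fin m) (Fin n) ℝ) :
    frobInner P Q = frobInner Q P := by
  unfold frobInner
  exact Finset.sum_congr rfl fun i _ => Finset.sum_congr rfl fun j _ => by ring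

lemma frobInner_smul_right {m n : ℕ} (s : ℝ) (P Q : Matrix (Fin m) (Fin n) ℝ) :
    frobInner P (s • Q) = s * frobInner P Q := by
  simp only [frobInner, Matrix.smul_apply, smul_eq_mul, Finset.mul_sum]
  exact Finset.sum_congr rfl fun i _ => Finset.sum_congr rfl fun j _ => by ring

lemma matrix_rank_sub_le {m n : ℕ} (P Q : Matrix (Fin m) (Fin n) ℝ) :
    (P - Q).rank ≤ P.rank + Q.rank := by
  classical
  have h1 : LinearMap.range (P - Q).mulVecLin ≤
      LinearMap.range P.mulVecLin ⊔ LinearMap.range Q.mulVecLin := by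
    rintro x ⟨v, rfl⟩
    have hx : (P - Q).mulVecLin v = P.mulVecLin v + Q.mulVecLin (-v) := by
      simp [Matrix.mulVecLin_apply, Matrix.sub_mulVec, Matrix.mulVec_neg, Matrix.neg_mulVec, sub_eq_add_neg]
    rw [hx]
    exact Submodule.add_mem_sup (LinearMap.mem_range_self _ v) (LinearMap.mem_range_self _ (-v))
  calc (P - Q).rank
      ≤ Module.finrank ℝ ↑(LinearMap.range P.mulVecLin ⊔ LinearMap.range Q.mulVecLin) :=
        Submodule.finrank_mono h1
    _ ≤ P.rank + Q.rank := Submodule.finrank_add_le_finrank_add_finrank _ _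

theorem svp_noisy_one_step {m n d k : ℕ} (δ : ℝ) (hδ0 : 0 ≤ δ)
    (hδ : δ < 1 / 3)
    (A : Matrix (Fin m) (Fin n) ℝ →ₗ[ℝ] EuclideanSpace ℝ (Fin d))
    (AT : EuclideanSpace ℝ (Fin d) →ₗ[ℝ] Matrix (Fin m) (Fin n) ℝ)
    (hAT : ∀ (X : Matrix (Fin m) (Fin n) ℝ) (v : EuclideanSpace ℝ (Fin d)),
      ⟪A X, v⟫ = frobInner (AT v) X)
    (hRIP : ∀ Z : Matrix (Fin m) (Fin n) ℝ, Z.rank ≤ 2 * k →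
      (1 - δ) * froSq Z ≤ ‖A Z‖ ^ 2 ∧ ‖A Z‖ ^ 2 ≤ (1 + δ) * froSq Z)
    (Xstar : Matrix (Fin m) (Fin n) ℝ) (hstar : Xstar.rank ≤ k)
    (e : EuclideanSpace ℝ (Fin d))
    (b : EuclideanSpace ℝ (Fin d)) (hb : b = A Xstar + e)
    (C : ℝ) (hC : C > (1 + δ) / (1 - 3 * δ))
    (Xt Xnext : Matrix (Fin m) (Fin n) ℝ)
    (ht : Xt.rank ≤ k) (hnext_rank : Xnext.rank ≤ k)
    (hproj : ∀ Z : Matrix (Fin m) (Fin n) ℝ, Z.rank ≤ k →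
      fro (Xt - (1 / (1 + δ)) • AT (A Xt - b) - Xnext) ≤
        fro (Xt - (1 / (1 + δ)) • AT (A Xt - b) - Z))
    (hlarge : (1 / 2) * ‖A Xt - b‖ ^ 2 ≥ C ^ 2 * ‖e‖ ^ 2 / 2) :
    (1 / 2) * ‖A Xnext - b‖ ^ 2 ≤
        (1 / C ^ 2 + (2 * δ / (1 - δ)) * (1 + 1 / C) ^ 2) *
          ((1 / 2) * ‖A Xt - b‖ ^ 2) ∧
      1 / C ^ 2 + (2 * δ / (1 - δ)) * (1 + 1 / C) ^ 2 < 1 := by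
  have h13 : (0:ℝ) < 1 - 3 * δ := by linarith
  have h1δ : (0:ℝ) < 1 + δ := by linarith
  have h1mδ : (0:ℝ) < 1 - δ := by linarith
  have hCpos : (0:ℝ) < C := lt_trans (div_pos h1δ h13) hC
  -- abbreviations
  set r : EuclideanSpace ℝ (Fin d) := A Xt - b with hr
  set g : Matrix (Fin m) (Fin n) ℝ := AT r with hg
  set R : ℝ := ‖r‖ with hR
  set E : ℝ := ‖e‖ with hE
  clear_value g
  have hRnn : 0 ≤ R := hR ▸ norm_nonneg _
  have hEnn : 0 ≤ E := hE ▸ norm_nonneg _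
  -- quadratic expansion of the objective
  have key : ∀ X : Matrix (Fin m) (Fin n) ℝ,
      ‖A X - b‖ ^ 2 = R ^ 2 - 2 * frobInner g (Xt - X) + ‖A (Xt - X)‖ ^ 2 := by
    intro X
    rw [hR, hg, hr]
    have hX : A X - b = (A Xt - b) - A (Xt - X) := by
      rw [map_sub]; abel
    rw [hX, norm_sub_sq_real, real_inner_comm, hAT]
  clear_value r R E
  -- rank bounds
  have hrankN : (Xt - Xnext).rank ≤ 2 * k :=
    le_trans (matrix_rank_sub_le _ _) (by omega)
  have hrankS : (Xt - Xstar).rank ≤ 2 * k :=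
    le_trans (matrix_rank_sub_le _ _) (by omega)
  have hup := (hRIP _ hrankN).2
  have hlo := (hRIP _ hrankS).1
  set In : ℝ := frobInner g (Xt - Xnext) with hIn
  set Is : ℝ := frobInner g (Xt - Xstar) with hIs
  set Fn : ℝ := froSq (Xt - Xnext) with hFn
  set Fs : ℝ := froSq (Xt - Xstar) with hFs
  -- projection inequality, squared and expanded
  have hp2 : (1 + δ) * Fn - 2 * In ≤ (1 + δ) * Fs - 2 * Is := by
    have hsq : froSq (Xt - (1 / (1 + δ)) • g - Xnext) ≤
        froSq (Xt - (1 / (1 + δ)) • g - Xstar) := by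
      have h2 := pow_le_pow_left₀ (Real.sqrt_nonneg _) (hproj Xstar hstar) 2
      simp only [fro] at h2
      rwa [Real.sq_sqrt (froSq_nonneg _), Real.sq_sqrt (froSq_nonneg _)] at h2
    have e1 : Xt - (1 / (1 + δ)) • g - Xnext = (Xt - Xnext) - (1 / (1 + δ)) • g :=
      sub_right_comm _ _ _
    have e2 : Xt - (1 / (1 + δ)) • g - Xstar = (Xt - Xstar) - (1 / (1 + δ)) • g :=
      sub_right_comm _ _ _
    rw [e1, e2, froSq_expand (Xt - Xnext) ((1 / (1 + δ)) • g),
      froSq_expand (Xt - Xstar) ((1 / (1 + δ)) • g), frobInner_smul_right, frobInner_smul_right,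
      frobInner_comm (Xt - Xnext) g, frobInner_comm (Xt - Xstar) g, ← hIn, ← hIs,
      ← hFn, ← hFs] at hsq
    clear_value In Is Fn Fs
    have h4 : Fn - Fs ≤ 2 * (1 / (1 + δ)) * (In - Is) := by linarith only [hsq]
    have h5 := mul_le_mul_of_nonneg_left h4 h1δ.le
    have h6 : (1 + δ) * (2 * (1 / (1 + δ)) * (In - Is)) = 2 * (In - Is) := by
      field_simp
    linarith only [h5, h6]
  clear_value In Is Fn Fs
  -- the residual at Xstar is the noise
  have hAstar : ‖A Xstar - b‖ = E := by
    rw [hE]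
    have : A Xstar - b = -e := by rw [hb]; abel
    rw [this, norm_neg]
  have keyS : E ^ 2 = R ^ 2 - 2 * Is + ‖A (Xt - Xstar)‖ ^ 2 := by
    rw [← hAstar, hIs]; exact key Xstar
  have keyN : ‖A Xnext - b‖ ^ 2 = R ^ 2 - 2 * In + ‖A (Xt - Xnext)‖ ^ 2 := by
    rw [hIn]; exact key Xnext
  -- step 1: ψ-reduction bound
  have step1 : ‖A Xnext - b‖ ^ 2 ≤ E ^ 2 + 2 * δ * Fs := by
    linarith only [keyN, keyS, hup, hlo, hp2]
  -- step 2: bound Fs by the image norm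
  have step2 : 2 * δ * Fs ≤ (2 * δ / (1 - δ)) * ‖A (Xt - Xstar)‖ ^ 2 := by
    rw [div_mul_eq_mul_div, le_div_iff₀ h1mδ]
    linarith only [mul_le_mul_of_nonneg_left hlo (by linarith only [hδ0] : (0:ℝ) ≤ 2 * δ)]
  -- step 3: ‖A(Xt - Xstar)‖ ≤ R + E
  have step3 : ‖A (Xt - Xstar)‖ ^ 2 ≤ (R + E) ^ 2 := by
    have hsum : A (Xt - Xstar) = (A Xt - b) + e := by
      rw [map_sub, hb]; abel
    have hle : ‖A (Xt - Xstar)‖ ≤ R + E := by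
      rw [hsum, hR, hr, hE]; exact norm_add_le _ _
    exact pow_le_pow_left₀ (norm_nonneg _) hle 2
  -- step 4: noise is small relative to residual
  have hCE : C * E ≤ R := by
    have h0 : C ^ 2 * E ^ 2 ≤ R ^ 2 := by linarith only [hlarge]
    have hsq : (C * E) ^ 2 ≤ R ^ 2 := by linarith only [h0, sq_nonneg (C * E - R)]
    exact (pow_le_pow_iff_left₀ (mul_nonneg hCpos.le hEnn) hRnn (by norm_num)).1 hsq
  have hE2 : E ^ 2 ≤ 1 / C ^ 2 * R ^ 2 := by
    rw [one_div, inv_mul_eq_div, le_div_iff₀ (pow_pos hCpos 2)]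
    linarith only [hlarge]
  have step6 : (R + E) ^ 2 ≤ (1 + 1 / C) ^ 2 * R ^ 2 := by
    have hE' : E ≤ 1 / C * R := by
      rw [div_mul_eq_mul_div, le_div_iff₀ hCpos, mul_comm]
      linarith only [hCE]
    have h7 : R + E ≤ (1 + 1 / C) * R := by
      have h10 : (1 + 1 / C) * R = R + 1 / C * R := by ring
      linarith only [hE', h10]
    calc (R + E) ^ 2 ≤ ((1 + 1 / C) * R) ^ 2 :=
          pow_le_pow_left₀ (by linarith) h7 2
      _ = (1 + 1 / C) ^ 2 * R ^ 2 := by ring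
  have ha : (0:ℝ) ≤ 2 * δ / (1 - δ) := div_nonneg (by linarith) h1mδ.le
  constructor
  · -- main inequality
    have hN1 : ‖A Xnext - b‖ ^ 2 ≤ E ^ 2 + (2 * δ / (1 - δ)) * (R + E) ^ 2 := by
      have h11 := mul_le_mul_of_nonneg_left step3 ha
      linarith only [step1, step2, h11]
    have h8 := mul_le_mul_of_nonneg_left step6 ha
    have hexp : (1 / C ^ 2 + (2 * δ / (1 - δ)) * (1 + 1 / C) ^ 2) * ((1 / 2) * R ^ 2) =
        (1 / 2) * (1 / C ^ 2 * R ^ 2) +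
          (1 / 2) * ((2 * δ / (1 - δ)) * ((1 + 1 / C) ^ 2 * R ^ 2)) := by ring
    rw [hexp]
    linarith only [hN1, hE2, h8]
  · -- contraction factor is below one
    have hc : 1 / C * (1 + δ) < 1 - 3 * δ := by
      have h9 : (1 + δ) < C * (1 - 3 * δ) := (div_lt_iff₀ h13).1 hC
      rw [div_mul_eq_mul_div, div_lt_iff₀ hCpos, one_mul]
      linarith only [h9]
    have hcpos : 0 < 1 / C := by positivity
    have hfac : (1 / C) ^ 2 + (2 * δ / (1 - δ)) * (1 + 1 / C) ^ 2 - 1 =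
        -((1 + 1 / C) * ((1 - 3 * δ) - (1 / C) * (1 + δ)) / (1 - δ)) := by
      field_simp
      ring
    have hpos : 0 < (1 + 1 / C) * ((1 - 3 * δ) - (1 / C) * (1 + δ)) :=
      mul_pos (by linarith) (by linarith)
    have hq := div_pos hpos h1mδ
    have hpow : (1 / C) ^ 2 = 1 / C ^ 2 := by
      rw [div_pow, one_pow]
    rw [← hpow]
    linarith only [hfac, hq]
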